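/- The average sensitivity of any nested canalizing function f with k ≥ 1 relevant variables satisfies k/2^{k-1} ≤ as(f) ≤ 4/3 - 2^{-k} - (1/3)·2^{-k}·(-1)^k. -/

import Mathlib

open Finset

/-- Sign encoding of a Boolean value: `true ↦ 1`, `false ↦ -1`. -/
def bsign (a : Bool) : ℝ := if a then 1 else -1

/-- The character `χ_U(x) = ∏_{i ∈ U} x_i` (inputs encoded as Booleans). -/
def chi {n : ℕ} (U : Finset (Fin n)) (x : Fin n → Bool) : ℝ :=
  ∏ i ∈ U, bsign (x i)

/-- Fourier coefficient `f̂(U) = 2^{-n} ∑_x f(x) χ_U(x)`. -/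
noncomputable def fhat {n : ℕ} (f : (Fin n → Bool) → ℝ) (U : Finset (Fin n)) : ℝ :=
  (∑ x : Fin n → Bool, f x * chi U x) / 2 ^ n

/-- `f` is a (±1-valued) Boolean function. -/
def IsBoolean {n : ℕ} (f : (Fin n → Bool) → ℝ) : Prop := ∀ x, f x = 1 ∨ f x = -1

/-- Restriction `f^{(i,a)}` of `f` obtained by fixing the `i`-th input to `a`. -/
def restrict {n : ℕ} (f : (Fin n → Bool) → ℝ) (i : Fin n) (a : Bool) :
    (Fin n → Bool) → ℝ :=
  fun x => f (Function.update x i a)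

/-- Variable `i` is relevant for `f`. -/
def relevant {n : ℕ} (f : (Fin n → Bool) → ℝ) (i : Fin n) : Prop :=
  ∃ x, f x ≠ f (Function.update x i (!(x i)))

/-- Number of relevant variables of `f`. -/
noncomputable def numRel {n : ℕ} (f : (Fin n → Bool) → ℝ) : ℕ :=
  Nat.card {i : Fin n // relevant f i}

/-- Influence `I_i(f) = Pr[f(X) ≠ f(X ⊕ e_i)]` for uniform `X`. -/
noncomputable def influence {n : ℕ} (f : (Fin n → Bool) → ℝ) (i : Fin n) : ℝ :=
  (Nat.card {x : Fin n → Bool // f x ≠ f (Function.update x i (!(x i)))} : ℝ) / 2 ^ n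

/-- Average sensitivity `as(f) = ∑_i I_i(f)`. -/
noncomputable def avgSens {n : ℕ} (f : (Fin n → Bool) → ℝ) : ℝ :=
  ∑ i : Fin n, influence f i

/-- `IsNCFwith f L` : `f` is a nested canalizing function with the nested canalizing
structure recorded by the list `L` of triples `(π(j), α_j, β_j)`: fixing variable
`π(j)` to its canalizing value `α_j` forces the output `β_j`, and the restriction to
the non-canalizing value continues with the rest of the list; the base case is a
constant (±1) function. -/
inductive IsNCFwith : {n : ℕ} → ((Fin n → Bool) → ℝ) → List (Fin n × Bool × ℝ) → Prop where
  | const {n : ℕ} (f : (Fin n → Bool) → ℝ) (b : ℝ) (hb : b = 1 ∨ b = -1)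
      (h : ∀ x, f x = b) : IsNCFwith f []
  | step {n : ℕ} (f : (Fin n → Bool) → ℝ) (i : Fin n) (a : Bool) (b : ℝ)
      (hb : b = 1 ∨ b = -1) (L : List (Fin n × Bool × ℝ))
      (hrel : relevant f i)
      (hcan : ∀ x, x i = a → f x = b)
      (hrest : IsNCFwith (restrict f i (!a)) L) :
      IsNCFwith f ((i, a, b) :: L)

/-- `f` is a nested canalizing function. -/
def IsNCF {n : ℕ} (f : (Fin n → Bool) → ℝ) : Prop := ∃ L, IsNCFwith f L

/-- Variable `i` is most dominant: some nested canalizing ordering starts with `i`. -/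
def MostDominant {n : ℕ} (f : (Fin n → Bool) → ℝ) (i : Fin n) : Prop :=
  ∃ a b L, IsNCFwith f ((i, a, b) :: L)

/-- The canalized output values `β_1, β_2, …` recorded in `L` alternate in sign. -/
def AltBetas {n : ℕ} (L : List (Fin n × Bool × ℝ)) : Prop :=
  List.Chain' (fun p q : Fin n × Bool × ℝ => q.2.2 = -p.2.2) L

/-!
Let `i` be the first variable of a nested canalizing order of `f`, with canalizing value `α` and
canalized output `β`, and let `g` be `f` with `x_i` fixed to `¬α`; `g` is nested canalizing with
one relevant variable fewer. Then `as(f) = Pr[g ≠ β] + as(g)/2` and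
`Pr[f ≠ c] = [β ≠ c]/2 + Pr[g ≠ c]/2`, and both bounds follow by induction along the order.

Lower bound: a nested canalizing function with `m` relevant variables that is not constantly `c`
differs from `c` on at least a `2^{-m}` fraction of the cube, so
`as(f) ≥ 2^{-(k-1)} + (k-1)/2^{k-1}`.

Upper bound: induct on `as(f) ≤ M k` together with `Pr[f ≠ c] + as(f)/2 ≤ M (k+1)` for
`c = ±1`. For `c = -β` the latter equals
`1/2 + (Pr[g ≠ β] + Pr[g ≠ -β])/2 + as(g)/4 = 1 + as(g)/4`, since `g` is `±1`-valued;
hence `M (k+2) = 1 + M k / 4` with `M 0 = 0`, `M 1 = 1`, which is solved by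
`M k = 4/3 - 2^{-k} - (-1)^k 2^{-k}/3`.
-/

open Function

lemma involutive_update_not {ι : Type*} [DecidableEq ι] (i : ι) :
    Involutive fun x : ι → Bool => update x i (!x i) := by
  intro x
  simp

section Cube

variable {ι : Type*} [Fintype ι] {P Q : (ι → Bool) → Prop}

noncomputable def prob (P : (ι → Bool) → Prop) : ℝ :=
  Nat.card {x // P x} / 2 ^ Fintype.card ι

lemma prob_congr (h : ∀ x, P x ↔ Q x) : prob P = prob Q := by
  rw [prob, prob, Nat.card_congr (Equiv.subtypeEquivRight h)]

lemma prob_nonneg (P : (ι → Bool) → Prop) : 0 ≤ prob P := by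
  unfold prob; positivity

lemma prob_or (h : ∀ x, ¬ (P x ∧ Q x)) :
    prob (fun x => P x ∨ Q x) = prob P + prob Q := by
  classical
  have hdisj : Disjoint P Q := by
    rw [Pi.disjoint_iff]
    exact fun x => Prop.disjoint_iff.2 (h x)
  rw [prob, prob, prob, ← add_div, Nat.card_congr (subtypeOrEquiv P Q hdisj), Nat.card_sum,
    Nat.cast_add]

lemma prob_add_prob_not (P : (ι → Bool) → Prop) : prob P + prob (fun x => ¬ P x) = 1 := by
  classical
  rw [prob, prob, ← add_div, ← Nat.cast_add, ← Nat.card_sum,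
    Nat.card_congr (Equiv.sumCompl P)]
  simp [Nat.card_eq_fintype_card]

lemma prob_eq_zero (h : ∀ x, ¬ P x) : prob P = 0 := by
  simp [prob, h]

lemma prob_eq_one (h : ∀ x, P x) : prob P = 1 := by
  simpa [prob_eq_zero (fun x => not_not.2 (h x))] using prob_add_prob_not P

lemma prob_le_one (P : (ι → Bool) → Prop) : prob P ≤ 1 := by
  linarith [prob_add_prob_not P, prob_nonneg (fun x => ¬ P x)]

variable [DecidableEq ι]

lemma prob_apply_eq_and (i : ι) (c : Bool) (hQ : ∀ x v, Q (update x i v) ↔ Q x) :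
    prob (fun x => x i = c ∧ Q x) = prob Q / 2 := by
  have hflip : prob (fun x => x i = c ∧ Q x) = prob (fun x => x i = !c ∧ Q x) := by
    rw [prob, prob, Nat.card_congr <| (involutive_update_not i).toPerm.subtypeEquiv fun x => ?_]
    simp [hQ]
  have hsplit : prob Q = prob (fun x => x i = c ∧ Q x) + prob (fun x => x i = !c ∧ Q x) := by
    rw [← prob_or (by rintro x ⟨⟨rfl, -⟩, h, -⟩; simp at h)]
    exact prob_congr fun x => by cases h : x i <;> cases c <;> simp
  linarith

end Cube

section Canalizing

variable {n : ℕ} {f g : (Fin n → Bool) → ℝ} {i j : Fin n} {a : Bool} {b : ℝ}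

lemma influence_eq_prob (f : (Fin n → Bool) → ℝ) (j : Fin n) :
    influence f j = prob (fun x => f x ≠ f (update x j (!x j))) := by
  simp [influence, prob]

lemma influence_eq_zero (h : ¬ relevant f j) : influence f j = 0 := by
  rw [influence_eq_prob, prob_eq_zero]
  simpa [relevant] using h

lemma avgSens_nonneg (f : (Fin n → Bool) → ℝ) : 0 ≤ avgSens f :=
  sum_nonneg fun j _ => (influence_eq_prob f j).symm ▸ prob_nonneg _

lemma avgSens_eq_zero_of_forall_eq {d : ℝ} (h : ∀ x, f x = d) : avgSens f = 0 :=
  sum_eq_zero fun j _ => influence_eq_zero (by simp [relevant, h])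

lemma numRel_eq_zero_of_forall_eq {d : ℝ} (h : ∀ x, f x = d) : numRel f = 0 := by
  rw [numRel, Nat.card_eq_zero]
  exact Or.inl ⟨fun ⟨j, x, hx⟩ => hx (by rw [h, h])⟩

lemma not_relevant_of_update_eq (hg : ∀ x v, g (update x i v) = g x) : ¬ relevant g i :=
  fun ⟨x, hx⟩ => hx (hg x _).symm

lemma restrict_update (f : (Fin n → Bool) → ℝ) (i : Fin n) (a : Bool) (x : Fin n → Bool)
    (v : Bool) : _root_.restrict f i a (update x i v) = _root_.restrict f i a x := by
  simp [_root_.restrict]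

lemma eq_ite_restrict (hcan : ∀ x, x i = a → f x = b) (x : Fin n → Bool) :
    f x = if x i = a then b else _root_.restrict f i (!a) x := by
  split_ifs with h
  · exact hcan x h
  · rw [_root_.restrict, ← Bool.eq_not.2 h, update_eq_self]

lemma prob_ne_of_canalizing (hf : ∀ x, f x = if x i = a then b else g x)
    (hg : ∀ x v, g (update x i v) = g x) (c : ℝ) :
    prob (fun x => f x ≠ c) = (if b = c then 0 else 1 / 2) + prob (fun x => g x ≠ c) / 2 := by
  have hsplit : prob (fun x => f x ≠ c) =
      prob (fun x => x i = a ∧ b ≠ c) + prob (fun x => x i = !a ∧ g x ≠ c) := by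
    rw [← prob_or (by rintro x ⟨⟨rfl, -⟩, h, -⟩; simp at h)]
    exact prob_congr fun x => by cases h : x i <;> cases a <;> simp [hf, h]
  rw [hsplit, prob_apply_eq_and i a (by simp), prob_apply_eq_and i (!a) (by simp [hg])]
  split_ifs with hbc
  · rw [prob_eq_zero (by simp [hbc])]; ring
  · rw [prob_eq_one (by simp [hbc])]

lemma influence_self_of_canalizing (hf : ∀ x, f x = if x i = a then b else g x)
    (hg : ∀ x v, g (update x i v) = g x) :
    influence f i = prob (fun x => g x ≠ b) := by
  rw [influence_eq_prob]
  refine prob_congr fun x => ?_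
  cases h : x i <;> cases a <;> simp [hf, h, hg, ne_comm]

lemma influence_of_canalizing (hf : ∀ x, f x = if x i = a then b else g x)
    (hg : ∀ x v, g (update x i v) = g x) (hj : j ≠ i) :
    influence f j = influence g j / 2 := by
  rw [influence_eq_prob, influence_eq_prob, ← prob_apply_eq_and i (!a) fun x v => by
    rw [update_of_ne hj, update_comm (Ne.symm hj), hg, hg]]
  refine prob_congr fun x => ?_
  cases h : x i <;> cases a <;> simp [hf, h, update_of_ne (Ne.symm hj)]

lemma avgSens_of_canalizing (hf : ∀ x, f x = if x i = a then b else g x)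
    (hg : ∀ x v, g (update x i v) = g x) :
    avgSens f = prob (fun x => g x ≠ b) + avgSens g / 2 := by
  rw [avgSens, avgSens, Fintype.sum_eq_add_sum_compl i, Fintype.sum_eq_add_sum_compl i,
    influence_self_of_canalizing hf hg, influence_eq_zero (not_relevant_of_update_eq hg),
    zero_add, sum_div]
  exact congrArg _ <| sum_congr rfl fun j hj =>
    influence_of_canalizing hf hg (by simpa using hj)

lemma relevant_iff_of_canalizing (hf : ∀ x, f x = if x i = a then b else g x)
    (hg : ∀ x v, g (update x i v) = g x) (hj : j ≠ i) :
    relevant f j ↔ relevant g j := by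
  constructor
  · rintro ⟨x, hx⟩
    refine ⟨x, ?_⟩
    cases h : x i <;> cases a <;> simp_all [update_of_ne (Ne.symm hj)]
  · rintro ⟨x, hx⟩
    refine ⟨update x i (!a), ?_⟩
    rw [hf, hf, update_of_ne hj, update_comm (Ne.symm hj), hg, hg]
    simpa using hx

lemma numRel_of_canalizing (hf : ∀ x, f x = if x i = a then b else g x)
    (hg : ∀ x v, g (update x i v) = g x) (hrel : relevant f i) :
    numRel f = numRel g + 1 := by
  have hset : {j | relevant f j} = insert i {j | relevant g j} := by
    ext j
    by_cases hj : j = i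
    · simp [hj, hrel]
    · simp [hj, relevant_iff_of_canalizing hf hg hj]
  change Nat.card {j | relevant f j} = Nat.card {j | relevant g j} + 1
  rw [hset, Nat.card_coe_set_eq, Nat.card_coe_set_eq,
    Set.ncard_insert_of_notMem (s := {j | relevant g j}) (not_relevant_of_update_eq hg)]

lemma exists_ne_of_canalizing (hf : ∀ x, f x = if x i = a then b else g x)
    (h : ∃ x, f x ≠ b) : ∃ x, g x ≠ b := by
  obtain ⟨x, hx⟩ := h
  refine ⟨x, ?_⟩
  rw [hf] at hx
  split_ifs at hx with h
  · exact absurd rfl hx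
  · exact hx

end Canalizing

noncomputable def ncfSensBound (k : ℕ) : ℝ :=
  4 / 3 - 1 / 2 ^ k - (1 / 3) * (1 / 2 ^ k) * (-1 : ℝ) ^ k

lemma ncfSensBound_zero : ncfSensBound 0 = 0 := by norm_num [ncfSensBound]

lemma ncfSensBound_one : ncfSensBound 1 = 1 := by norm_num [ncfSensBound]

lemma ncfSensBound_add_two (k : ℕ) : ncfSensBound (k + 2) = 1 + ncfSensBound k / 4 := by
  rw [ncfSensBound, ncfSensBound, pow_add, pow_add]
  field_simp
  ring

lemma ncfSensBound_le_succ (k : ℕ) : ncfSensBound k ≤ ncfSensBound (k + 1) := by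
  have hpos : (0 : ℝ) < 1 / 2 ^ k := by positivity
  have hhalf : (1 : ℝ) / 2 ^ (k + 1) = 1 / 2 ^ k / 2 := by ring
  rcases Nat.even_or_odd k with hk | hk <;>
    rw [ncfSensBound, ncfSensBound, hk.neg_one_pow, hk.add_one.neg_one_pow, hhalf] <;>
    linarith

namespace IsNCFwith

variable {n : ℕ} {f : (Fin n → Bool) → ℝ} {L : List (Fin n × Bool × ℝ)}

lemma isBoolean (h : IsNCFwith f L) : IsBoolean f := by
  induction h with
  | const f b hb hconst => exact fun x => hconst x ▸ hb
  | step f i a b hb L hrel hcan hrest ih =>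
    intro x
    rw [eq_ite_restrict hcan]
    split_ifs
    exacts [hb, ih x]

lemma numRel_eq (h : IsNCFwith f L) : numRel f = L.length := by
  induction h with
  | const f b hb hconst => exact numRel_eq_zero_of_forall_eq hconst
  | step f i a b hb L hrel hcan hrest ih =>
    rw [numRel_of_canalizing (eq_ite_restrict hcan) (restrict_update f i _) hrel, ih,
      List.length_cons]

lemma inv_two_pow_length_le_prob_ne (h : IsNCFwith f L) {c : ℝ} (hc : ∃ x, f x ≠ c) :
    1 / 2 ^ L.length ≤ prob (fun x => f x ≠ c) := by
  induction h generalizing c with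
  | const f b hb hconst =>
    obtain ⟨x, hx⟩ := hc
    rw [prob_eq_one fun y => hconst y ▸ hconst x ▸ hx]
    norm_num
  | step f i a b hb L hrel hcan hrest ih =>
    rw [prob_ne_of_canalizing (eq_ite_restrict hcan) (restrict_update f i _), List.length_cons,
      pow_succ, ← div_div]
    split_ifs with hbc
    · subst hbc
      linarith [ih (exists_ne_of_canalizing (eq_ite_restrict hcan) hc)]
    · have : 1 / 2 ^ L.length ≤ (1 : ℝ) :=
        div_le_one_of_le₀ (one_le_pow₀ one_le_two) (by positivity)
      linarith [prob_nonneg fun x => _root_.restrict f i (!a) x ≠ c]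

lemma two_mul_length_div_le_avgSens (h : IsNCFwith f L) :
    2 * L.length / 2 ^ L.length ≤ avgSens f := by
  induction h with
  | const f b hb hconst => simp [avgSens_eq_zero_of_forall_eq hconst]
  | step f i a b hb L hrel hcan hrest ih =>
    have hg_ne : ∃ x, _root_.restrict f i (!a) x ≠ b := by
      refine exists_ne_of_canalizing (eq_ite_restrict hcan) ?_
      by_contra! hconst
      exact hrel.elim fun x hx => hx (by rw [hconst, hconst])
    rw [avgSens_of_canalizing (eq_ite_restrict hcan) (restrict_update f i _), List.length_cons]
    have hmass := hrest.inv_two_pow_length_le_prob_ne hg_ne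
    calc 2 * ((L.length + 1 : ℕ) : ℝ) / 2 ^ (L.length + 1)
        = 1 / 2 ^ L.length + 2 * L.length / 2 ^ L.length / 2 := by
          rw [pow_succ]; push_cast; field_simp; ring
      _ ≤ _ := by linarith

lemma avgSens_le_and_prob_ne_add_le (h : IsNCFwith f L) :
    avgSens f ≤ ncfSensBound L.length ∧
      ∀ c : ℝ, c = 1 ∨ c = -1 →
        prob (fun x => f x ≠ c) + avgSens f / 2 ≤ ncfSensBound (L.length + 1) := by
  induction h with
  | const f b hb hconst =>
    rw [avgSens_eq_zero_of_forall_eq hconst, List.length_nil, ncfSensBound_zero,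
      ncfSensBound_one]
    exact ⟨le_rfl, fun c _ => by linarith [prob_le_one fun x => f x ≠ c]⟩
  | step f i a b hb L hrel hcan hrest ih =>
    have hf := eq_ite_restrict hcan
    have hg := restrict_update f i (!a)
    set g := _root_.restrict f i (!a)
    obtain ⟨hsens, hprob⟩ := ih
    have hfsens := avgSens_of_canalizing hf hg
    rw [List.length_cons]
    refine ⟨by linarith [hprob b hb], fun c hc => ?_⟩
    rw [prob_ne_of_canalizing hf hg]
    split_ifs with hbc
    · subst hbc
      linarith [hprob b hb, ncfSensBound_le_succ (L.length + 1), avgSens_nonneg g]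
    · obtain rfl : c = -b := by
        rcases hb with rfl | rfl <;> rcases hc with rfl | rfl <;>
          first | exact absurd rfl hbc | norm_num
      have hcompl : prob (fun x => g x ≠ b) + prob (fun x => g x ≠ -b) = 1 := by
        rw [← prob_add_prob_not fun x => g x ≠ b]
        refine congrArg _ (prob_congr fun x => ?_)
        rcases hrest.isBoolean x with hx | hx <;> rcases hb with rfl | rfl <;> norm_num [hx]
      linarith [ncfSensBound_add_two L.length]

end IsNCFwith

theorem avgSens_ncf_bounds_general {n : ℕ} (f : (Fin n → Bool) → ℝ)
    (hf : IsNCF f) (k : ℕ) (hk : numRel f = k) :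
    (k : ℝ) / 2 ^ (k - 1) ≤ avgSens f ∧
    avgSens f ≤ 4 / 3 - 1 / 2 ^ k - (1 / 3) * (1 / 2 ^ k) * (-1 : ℝ) ^ k := by
  obtain ⟨L, hL⟩ := hf
  obtain rfl : L.length = k := hL.numRel_eq.symm.trans hk
  refine ⟨?_, hL.avgSens_le_and_prob_ne_add_le.1⟩
  have hhalf : (L.length : ℝ) / 2 ^ (L.length - 1) = 2 * L.length / 2 ^ L.length := by
    rcases L.length with _ | m
    · simp
    · rw [Nat.add_sub_cancel, pow_succ]; field_simp
  exact hhalf ▸ hL.two_mul_length_div_le_avgSens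

/-- Tight bounds on the average sensitivity of an NCF with `k ≥ 1` relevant variables. -/
theorem avgSens_ncf_bounds {n : ℕ} (f : (Fin n → Bool) → ℝ)
    (hf : IsNCF f) (k : ℕ) (hk : numRel f = k) (h1 : 1 ≤ k) :
    (k : ℝ) / 2 ^ (k - 1) ≤ avgSens f ∧
    avgSens f ≤ 4 / 3 - 1 / 2 ^ k - (1 / 3) * (1 / 2 ^ k) * (-1 : ℝ) ^ k :=
  avgSens_ncf_bounds_general f hf k hk
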